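/- Let n ≥ 4, let c ∈ A_n be doubly pure, let r, s ∈ ℝ with r ≠ 0, and set a = r·c + s·ẽ_0 (a pure element of A_n). Then a is alternative if and only if c is alternative. -/

import Mathlib

noncomputable section

open scoped Quaternion

/-- The Cayley–Dickson algebra `A n = ℝ^(2^n)` as a type. -/
def CD : ℕ → Type
  | 0 => ℝ
  | n + 1 => CD n × CD n

namespace CD

instance instAddCommGroup : (n : ℕ) → AddCommGroup (CD n)
  | 0 => inferInstanceAs (AddCommGroup ℝ)
  | n + 1 =>
    letI := instAddCommGroup n
    inferInstanceAs (AddCommGroup (CD n × CD n))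

instance instModule : (n : ℕ) → Module ℝ (CD n)
  | 0 => inferInstanceAs (Module ℝ ℝ)
  | n + 1 =>
    letI := instModule n
    inferInstanceAs (Module ℝ (CD n × CD n))

/-- Conjugation in the Cayley–Dickson algebra. -/
def conj : {n : ℕ} → CD n → CD n
  | 0, x => x
  | _ + 1, x => (conj x.1, -x.2)

/-- Cayley–Dickson multiplication. -/
def mul : {n : ℕ} → CD n → CD n → CD n
  | 0, x, y => Mul.mul (α := ℝ) x y
  | _ + 1, x, y =>
    (mul x.1 y.1 - mul (conj y.2) x.2, mul y.2 x.1 + mul x.2 (conj y.1))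

instance instMul (n : ℕ) : Mul (CD n) := ⟨mul⟩

/-- The multiplicative unit `e₀`. -/
def one : {n : ℕ} → CD n
  | 0 => (1 : ℝ)
  | _ + 1 => (one, 0)

instance instOne (n : ℕ) : One (CD n) := ⟨one⟩

/-- The Euclidean inner product on `A n = ℝ^(2^n)`. -/
def inner : {n : ℕ} → CD n → CD n → ℝ
  | 0, x, y => (x * y : ℝ)
  | _ + 1, x, y => inner x.1 y.1 + inner x.2 y.2

/-- The Euclidean norm on `A n = ℝ^(2^n)`. -/
def norm {n : ℕ} (x : CD n) : ℝ := Real.sqrt (inner x x)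

/-- `ã = (-a₂, a₁)`. -/
def tilde {n : ℕ} (a : CD (n + 1)) : CD (n + 1) := (-a.2, a.1)

/-- `ẽ₀ = (0, e₀)`. -/
def etilde (n : ℕ) : CD (n + 1) := ((0 : CD n), (1 : CD n))

/-- An element is pure if its conjugate is its negative. -/
def IsPure {n : ℕ} (a : CD n) : Prop := conj a = -a

/-- An element of `A (n+1)` is doubly pure if both of its coordinates are pure. -/
def IsDoublyPure {n : ℕ} (a : CD (n + 1)) : Prop := IsPure a.1 ∧ IsPure a.2

/-- The associator `(a,b,c) = (ab)c - a(bc)`. -/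
def assoc {n : ℕ} (a b c : CD n) : CD n := a * b * c - a * (b * c)

/-- An element is alternative if `(a,a,x) = 0` for all `x`. -/
def IsAlternative {n : ℕ} (a : CD n) : Prop := ∀ x : CD n, assoc a a x = 0

/-- An element is strongly alternative if `(a,a,x) = 0` and `(a,x,x) = 0` for all `x`. -/
def IsStronglyAlternative {n : ℕ} (a : CD n) : Prop :=
  (∀ x : CD n, assoc a a x = 0) ∧ (∀ x : CD n, assoc a x x = 0)

/-- The pure (imaginary) part of an element. -/
def im {n : ℕ} (a : CD n) : CD n := (2⁻¹ : ℝ) • (a - conj a)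

/-- `H a`, the span of `{e₀, ã, a, ẽ₀}`. -/
def H {n : ℕ} (a : CD (n + 1)) : Submodule ℝ (CD (n + 1)) :=
  Submodule.span ℝ {(1 : CD (n + 1)), tilde a, a, etilde n}

/-- The orthogonal complement of `H a`. -/
def Hperp {n : ℕ} (a : CD (n + 1)) : Set (CD (n + 1)) :=
  {x | ∀ y ∈ H a, inner y x = 0}

end CD

/-! The associator is bilinear in its first two arguments, so for `a = r c + s ẽ₀`
`(a, a, x) = r² (c, c, x) + r s ((c, ẽ₀, x) + (ẽ₀, c, x)) + s² (ẽ₀, ẽ₀, x)`.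
Since `ẽ₀ (ẽ₀ x) = -x = ẽ₀² x`, the last term vanishes. A doubly pure `c` anticommutes with `ẽ₀`
and satisfies `c (ẽ₀ x) + ẽ₀ (c x) = 0`, so the middle term vanishes too. Hence
`(a, a, x) = r² (c, c, x)` with `r² ≠ 0`. -/

namespace CD

section Components

variable {n : ℕ} (x y : CD (n + 1))

@[ext] theorem ext {x y : CD (n + 1)} (h₁ : x.1 = y.1) (h₂ : x.2 = y.2) : x = y := Prod.ext h₁ h₂

@[simp] theorem fst_add : (x + y).1 = x.1 + y.1 := rfl
@[simp] theorem snd_add : (x + y).2 = x.2 + y.2 := rfl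
@[simp] theorem fst_neg : (-x).1 = -x.1 := rfl
@[simp] theorem snd_neg : (-x).2 = -x.2 := rfl
@[simp] theorem fst_zero : (0 : CD (n + 1)).1 = 0 := rfl
@[simp] theorem snd_zero : (0 : CD (n + 1)).2 = 0 := rfl
@[simp] theorem fst_smul (r : ℝ) : (r • x).1 = r • x.1 := rfl
@[simp] theorem snd_smul (r : ℝ) : (r • x).2 = r • x.2 := rfl
@[simp] theorem fst_one : (1 : CD (n + 1)).1 = 1 := rfl
@[simp] theorem snd_one : (1 : CD (n + 1)).2 = 0 := rfl
@[simp] theorem fst_etilde : (etilde n).1 = 0 := rfl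
@[simp] theorem snd_etilde : (etilde n).2 = 1 := rfl
@[simp] theorem fst_conj : (conj x).1 = conj x.1 := rfl
@[simp] theorem snd_conj : (conj x).2 = -x.2 := rfl
@[simp] theorem fst_mul : (x * y).1 = x.1 * y.1 - conj y.2 * x.2 := rfl
@[simp] theorem snd_mul : (x * y).2 = y.2 * x.1 + x.2 * conj y.1 := rfl

end Components

@[simp] theorem conj_add {n : ℕ} (a b : CD n) : conj (a + b) = conj a + conj b := by
  induction n with
  | zero => rfl
  | succ n ih => ext <;> simp [ih, add_comm]

@[simp] theorem conj_smul {n : ℕ} (r : ℝ) (a : CD n) : conj (r • a) = r • conj a := by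
  induction n with
  | zero => rfl
  | succ n ih => ext <;> simp [ih]

@[simp] theorem conj_conj {n : ℕ} (a : CD n) : conj (conj a) = a := by
  induction n with
  | zero => rfl
  | succ n ih => ext <;> simp [ih]

@[simp] theorem conj_neg {n : ℕ} (a : CD n) : conj (-a) = -conj a := by
  simpa using conj_smul (-1) a

@[simp] theorem conj_sub {n : ℕ} (a b : CD n) : conj (a - b) = conj a - conj b := by
  simp [sub_eq_add_neg]

@[simp] theorem conj_zero {n : ℕ} : conj (0 : CD n) = 0 := by
  simpa using conj_smul 0 (0 : CD n)

theorem mul_add_and_add_mul {n : ℕ} :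
    (∀ a b c : CD n, a * (b + c) = a * b + a * c) ∧
      ∀ a b c : CD n, (a + b) * c = a * c + b * c := by
  induction n with
  | zero => exact ⟨mul_add (R := ℝ), add_mul (R := ℝ)⟩
  | succ n ih =>
    obtain ⟨ih_mul_add, ih_add_mul⟩ := ih
    constructor <;> intro a b c <;> ext <;>
      simp only [fst_mul, snd_mul, fst_add, snd_add, conj_add, ih_mul_add, ih_add_mul] <;> abel

theorem smul_mul_and_mul_smul {n : ℕ} (r : ℝ) :
    (∀ a b : CD n, (r • a) * b = r • (a * b)) ∧ ∀ a b : CD n, a * (r • b) = r • (a * b) := by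
  induction n with
  | zero => exact ⟨mul_assoc (G := ℝ) r, fun a b => mul_left_comm (G := ℝ) a r b⟩
  | succ n ih =>
    obtain ⟨ih_smul_mul, ih_mul_smul⟩ := ih
    constructor <;> intro a b <;> ext <;> simp [ih_smul_mul, ih_mul_smul, smul_sub, smul_add]

-- Scoped: globally, `+` on `CD n` would also be found through `Distrib`, and statements outside
-- `CD` would elaborate to different (if defeq) terms.
scoped instance (n : ℕ) : NonUnitalNonAssocRing (CD n) where
  left_distrib := mul_add_and_add_mul.1
  right_distrib := mul_add_and_add_mul.2
  zero_mul a := by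
    have h := mul_add_and_add_mul.2 0 0 a
    rwa [add_zero, left_eq_add] at h
  mul_zero a := by
    have h := mul_add_and_add_mul.1 a 0 0
    rwa [add_zero, left_eq_add] at h

scoped instance (n : ℕ) : IsScalarTower ℝ (CD n) (CD n) :=
  ⟨fun r a b => (smul_mul_and_mul_smul r).1 a b⟩

scoped instance (n : ℕ) : SMulCommClass ℝ (CD n) (CD n) :=
  ⟨fun r a b => ((smul_mul_and_mul_smul r).2 a b).symm⟩

@[simp] theorem conj_one {n : ℕ} : conj (1 : CD n) = 1 := by
  induction n with
  | zero => rfl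
  | succ n ih => ext <;> simp [ih]

theorem one_mul_and_mul_one {n : ℕ} : (∀ a : CD n, 1 * a = a) ∧ ∀ a : CD n, a * 1 = a := by
  induction n with
  | zero => exact ⟨one_mul (M := ℝ), mul_one (M := ℝ)⟩
  | succ n ih =>
    obtain ⟨ih_one_mul, ih_mul_one⟩ := ih
    constructor <;> intro a <;> ext <;> simp [ih_one_mul, ih_mul_one]

scoped instance (n : ℕ) : MulOneClass (CD n) where
  one_mul := one_mul_and_mul_one.1
  mul_one := one_mul_and_mul_one.2

@[simp] theorem conj_mul {n : ℕ} (a b : CD n) : conj (a * b) = conj b * conj a := by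
  induction n with
  | zero => exact mul_comm (G := ℝ) a b
  | succ n ih => ext <;> simp [ih]

theorem etilde_mul_etilde (n : ℕ) : etilde n * etilde n = -1 := by
  ext <;> simp

theorem isAlternative_etilde (n : ℕ) : IsAlternative (etilde n) := by
  intro x
  have h : etilde n * (etilde n * x) = -x := by ext <;> simp
  rw [assoc, etilde_mul_etilde, neg_mul, one_mul, h, sub_self]

theorem assoc_smul_add_smul_self {n : ℕ} (r s : ℝ) (a b x : CD n) :
    assoc (r • a + s • b) (r • a + s • b) x =
      (r * r) • assoc a a x + (r * s) • (assoc a b x + assoc b a x) + (s * s) • assoc b b x := by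
  simp only [assoc, add_mul, mul_add, smul_mul_assoc, mul_smul_comm]
  module

namespace IsDoublyPure

variable {n : ℕ} {c : CD (n + 1)}

theorem etilde_mul (hc : IsDoublyPure c) : etilde n * c = -(c * etilde n) := by
  have h₁ : conj c.1 = -c.1 := hc.1
  have h₂ : conj c.2 = -c.2 := hc.2
  ext <;> simp [h₁, h₂]

theorem mul_etilde_mul_add_etilde_mul_mul (hc : IsDoublyPure c) (x : CD (n + 1)) :
    c * (etilde n * x) + etilde n * (c * x) = 0 := by
  have h₁ : conj c.1 = -c.1 := hc.1
  have h₂ : conj c.2 = -c.2 := hc.2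
  ext <;>
    simp only [fst_add, snd_add, fst_mul, snd_mul, fst_etilde, snd_etilde, fst_zero, snd_zero,
      zero_mul, mul_zero, one_mul, mul_one, zero_add, zero_sub, mul_neg, neg_mul, conj_add,
      conj_sub, conj_neg, conj_mul, conj_conj, h₁, h₂] <;>
    abel

theorem assoc_etilde_add_assoc_etilde (hc : IsDoublyPure c) (x : CD (n + 1)) :
    assoc c (etilde n) x + assoc (etilde n) c x = 0 :=
  calc assoc c (etilde n) x + assoc (etilde n) c x
      = -(c * (etilde n * x) + etilde n * (c * x)) := by
        rw [assoc, assoc, hc.etilde_mul, neg_mul]; abel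
    _ = 0 := by rw [hc.mul_etilde_mul_add_etilde_mul_mul, neg_zero]

end IsDoublyPure

end CD

theorem smul_add_smul_etilde_isAlternative_iff_general (n : ℕ) (c : CD (n + 1))
    (hc : CD.IsDoublyPure c) (r s : ℝ) (hr : r ≠ 0) :
    CD.IsAlternative (r • c + s • CD.etilde n) ↔ CD.IsAlternative c := by
  have key (x : CD (n + 1)) : CD.assoc (r • c + s • CD.etilde n) (r • c + s • CD.etilde n) x =
      (r * r) • CD.assoc c c x := by
    rw [CD.assoc_smul_add_smul_self, hc.assoc_etilde_add_assoc_etilde,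
      CD.isAlternative_etilde n x, smul_zero, smul_zero, add_zero, add_zero]
  simp only [CD.IsAlternative, key, smul_eq_zero_iff_right (mul_ne_zero hr hr)]

/-- For `n ≥ 4`, `c` doubly pure and `r ≠ 0`,
`a = r·c + s·ẽ₀` is alternative iff `c` is alternative. -/
theorem smul_add_smul_etilde_isAlternative_iff (n : ℕ) (hn : 4 ≤ n + 1) (c : CD (n + 1))
    (hc : CD.IsDoublyPure c) (r s : ℝ) (hr : r ≠ 0) :
    CD.IsAlternative (r • c + s • CD.etilde n) ↔ CD.IsAlternative c :=
  smul_add_smul_etilde_isAlternative_iff_general n c hc r s hr
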